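/- arXiv:1812.10249 — 5 statements merged into one kernel-verified Lean document; each statement's English description precedes it below -/
import Mathlib

section
/- Suppose f_1,…,f_m ∈ F[x_1,…,x_n] and Φ is an F-faithful homomorphism for {f_1,…,f_m}. Then for every polynomial C(z_1,…,z_m) ∈ F[z_1,…,z_m], one has C(f_1,…,f_m) = 0 if and only if C(Φ(f_1),…,Φ(f_m)) = 0. -/
/-- The algebraic rank (transcendence degree) of a finite family `f : Fin m → A`
of elements of an `F`-algebra `A`: the size of a largest subfamily that is
algebraically independent over `F`. -/
noncomputable def algRank (F : Type*) [CommRing F] {A : Type*} [CommRing A] [Algebra F A]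
    {m : ℕ} (f : Fin m → A) : ℕ :=
  sSup {r : ℕ | ∃ ι : Fin r → Fin m, Function.Injective ι ∧ AlgebraicIndependent F (f ∘ ι)}

/-!
Pick `k = algRank F (Φ ∘ f)` indices `ι` with `Φ ∘ f ∘ ι` algebraically independent. Then
`f ∘ ι` is independent as well, and since `algRank F f = k`, every `f j` (hence `g = C(f)`) is
algebraic over `R = F[f ∘ ι]`, on which `Φ` is injective. If `g ≠ 0`, it is a root of a
polynomial over `R` with nonzero constant term `c`; applying `Φ` and using `Φ g = 0` gives
`Φ c = 0`, so `c = 0`.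
-/

open Function Set Algebra MvPolynomial

section algRank

variable {F A : Type*} [CommRing F] [CommRing A] [Algebra F A] {m : ℕ} (f : Fin m → A)

theorem bddAbove_algRank :
    BddAbove {r : ℕ | ∃ ι : Fin r → Fin m, Injective ι ∧ AlgebraicIndependent F (f ∘ ι)} :=
  ⟨m, fun _ ⟨ι, hι, _⟩ => by simpa using Fintype.card_le_of_injective ι hι⟩

theorem card_le_algRank {ι : Type*} [Fintype ι] {e : ι → Fin m} (he : Injective e)
    (hind : AlgebraicIndependent F (f ∘ e)) : Fintype.card ι ≤ algRank F f := by
  let σ := (Fintype.equivFin ι).symm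
  exact le_csSup (bddAbove_algRank f) ⟨e ∘ σ, he.comp σ.injective, hind.comp σ σ.injective⟩

theorem exists_algebraicIndependent_algRank (hF : Injective (algebraMap F A)) :
    ∃ ι : Fin (algRank F f) → Fin m, Injective ι ∧ AlgebraicIndependent F (f ∘ ι) :=
  Nat.sSup_mem (s := {r : ℕ | ∃ ι : Fin r → Fin m, Injective ι ∧ AlgebraicIndependent F (f ∘ ι)})
    ⟨0, Fin.elim0, fun a => a.elim0, algebraicIndependent_empty_type_iff.mpr hF⟩
    (bddAbove_algRank f)

theorem isAlgebraic_adjoin_of_algRank_le [Nontrivial A] {k : ℕ} {ι : Fin k → Fin m}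
    (hι : Injective ι) (hind : AlgebraicIndependent F (f ∘ ι)) (hk : algRank F f ≤ k) (j : Fin m) :
    IsAlgebraic (adjoin F (range (f ∘ ι))) (f j) := by
  by_cases hj : j ∈ range ι
  · obtain ⟨i, rfl⟩ := hj
    exact isAlgebraic_algebraMap (⟨f (ι i), subset_adjoin ⟨i, rfl⟩⟩ : adjoin F (range (f ∘ ι)))
  -- a transcendental `f j` would extend `f ∘ ι` to an independent family of size `k + 1`
  by_contra htr
  have hext : AlgebraicIndependent F (f ∘ fun o : Option (Fin k) => o.elim j ι) := by
    convert (hind.option_iff_transcendental (f j)).mpr htr using 1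
    ext (_ | _) <;> rfl
  have hinj : Injective fun o : Option (Fin k) => o.elim j ι := by
    rintro (_ | a) (_ | b) h
    all_goals simp_all [hι.eq_iff]
  have := card_le_algRank f hinj hext
  simp only [Fintype.card_option, Fintype.card_fin] at this
  omega

end algRank

theorem isAlgebraic_aeval_of_forall_isAlgebraic {F R A ι : Type*} [CommRing F] [CommRing R]
    [IsDomain R] [CommRing A] [Algebra F R] [Algebra R A] [Algebra F A] [IsScalarTower F R A]
    {x : ι → A} (hx : ∀ i, IsAlgebraic R (x i)) (C : MvPolynomial ι F) :
    IsAlgebraic R (aeval x C) := by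
  have hle : adjoin F (range x) ≤ (Subalgebra.algebraicClosure R A).restrictScalars F :=
    adjoin_le (range_subset_iff.mpr hx)
  apply hle
  rw [adjoin_range_eq_range_aeval]
  exact ⟨C, rfl⟩

theorem AlgebraicIndependent.injective_comp_adjoin_val {F A B ι : Type*} [CommRing F]
    [CommRing A] [CommRing B] [Algebra F A] [Algebra F B] (Φ : A →ₐ[F] B) {x : ι → A}
    (hx : AlgebraicIndependent F (Φ ∘ x)) :
    Injective (Φ ∘ ((↑) : adjoin F (range x) → A)) := by
  rintro ⟨a, ha⟩ ⟨b, hb⟩ hab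
  rw [adjoin_range_eq_range_aeval] at ha hb
  obtain ⟨p, rfl⟩ := ha
  obtain ⟨q, rfl⟩ := hb
  have hpq : p = q := algebraicIndependent_iff_injective_aeval.mp hx <| by
    simpa only [comp_apply, AlgHom.toRingHom_eq_coe, AlgHom.coe_toRingHom, comp_aeval_apply,
      comp_def] using hab
  subst hpq
  rfl

theorem eq_zero_of_isAlgebraic_of_map_eq_zero {R A B : Type*} [CommRing R] [CommRing A]
    [IsDomain A] [Algebra R A] [CommRing B] (Φ : A →+* B) (hΦ : Injective (Φ ∘ algebraMap R A))
    {g : A} (hg : IsAlgebraic R g) (hΦg : Φ g = 0) : g = 0 := by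
  by_contra hg0
  obtain ⟨q, hq0, hq⟩ :=
    hg.exists_nonzero_coeff_and_aeval_eq_zero (mem_nonZeroDivisors_of_ne_zero hg0)
  have : (Φ.comp (algebraMap R A)) (q.coeff 0) = 0 :=
    calc (Φ.comp (algebraMap R A)) (q.coeff 0)
        = q.eval₂ (Φ.comp (algebraMap R A)) (Φ g) := by rw [hΦg, Polynomial.eval₂_at_zero]
      _ = Φ (Polynomial.aeval g q) := (Polynomial.hom_eval₂ ..).symm
      _ = 0 := by rw [hq, map_zero]
  exact hq0 (hΦ (by simpa using this))

/-- If `Φ : F[x_1,…,x_n] → K[y_1,…,y_r]` is an `F`-faithful homomorphism for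
`{f_1,…,f_m}` (i.e. it preserves the algebraic rank over `F` of this set), then for
every polynomial `C(z_1,…,z_m)` over `F` we have
`C(f_1,…,f_m) = 0 ↔ C(Φ(f_1),…,Φ(f_m)) = 0`. -/
theorem faithful_preserves_nonzeroness (F K : Type*) [Field F] [Field K] [Algebra F K]
    (n r m : ℕ) (f : Fin m → MvPolynomial (Fin n) F)
    (Φ : MvPolynomial (Fin n) F →ₐ[F] MvPolynomial (Fin r) K)
    (hfaithful : algRank F f = algRank F (fun i => Φ (f i))) :
    ∀ C : MvPolynomial (Fin m) F,
      MvPolynomial.aeval f C = 0 ↔ MvPolynomial.aeval (fun i => Φ (f i)) C = 0 := by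
  intro C
  rw [← comp_aeval_apply]
  refine ⟨fun h => by rw [h, map_zero], fun hΦ => ?_⟩
  obtain ⟨ι, hι, hΦind⟩ :=
    exists_algebraicIndependent_algRank (fun i => Φ (f i)) (algebraMap F _).injective
  have hind : AlgebraicIndependent F (f ∘ ι) := hΦind.of_comp Φ
  have halg : ∀ j, IsAlgebraic (adjoin F (range (f ∘ ι))) (f j) :=
    isAlgebraic_adjoin_of_algRank_le f hι hind hfaithful.le
  exact eq_zero_of_isAlgebraic_of_map_eq_zero Φ.toRingHom (hΦind.injective_comp_adjoin_val Φ)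
    (isAlgebraic_aeval_of_forall_isAlgebraic halg C) hΦ
end

section
/- Let F be a field, s a formal variable, and w_1 < w_2 < … < w_n natural numbers. Let V be the n×n matrix over F[s] with V[i,j] = s^{j·w_i}, and let V' be any matrix obtained from V by replacing some off-diagonal entries by 0 (so V'[i,i] = s^{i·w_i} for all i, and for i ≠ j, V'[i,j] ∈ {0, s^{j·w_i}}). Then det(V') ≠ 0 and the degree of det(V') as a polynomial in s equals Σ_{i=1}^{n} i·w_i. -/
open Polynomial

/-!
Expand the determinant by the Leibniz formula. Each term `sign σ • ∏ i, V' (σ i) i` is either `0`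
or `±X ^ ∑ i, (i + 1) * w (σ i)`, and by the strict rearrangement inequality this exponent is
smaller than `∑ i, (i + 1) * w i` unless `σ = 1`. The identity term `X ^ ∑ i, (i + 1) * w i` is
therefore the leading term, so the determinant is monic of that degree.
-/

open Finset Equiv

theorem Equiv.Perm.eq_one_of_monotone {α : Type*} [LinearOrder α] [WellFoundedLT α]
    {σ : Perm α} (hσ : Monotone σ) : σ = 1 := by
  have h : (hσ.strictMono_of_injective σ.injective).orderIsoOfSurjective σ σ.surjective =
      OrderIso.refl α :=
    Subsingleton.elim _ _
  ext a
  exact DFunLike.congr_fun h a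

theorem StrictMono.sum_mul_comp_perm_lt_sum_mul {ι α : Type*} [LinearOrder ι] [Fintype ι]
    [Semiring α] [LinearOrder α] [IsStrictOrderedRing α] [ExistsAddOfLE α]
    {f g : ι → α} (hf : StrictMono f) (hg : StrictMono g) {σ : Perm ι} (hσ : σ ≠ 1) :
    ∑ i, f i * g (σ i) < ∑ i, f i * g i := by
  refine (hf.monotone.monovary hg.monotone).sum_mul_comp_perm_lt_sum_mul_iff.2 fun h ↦ hσ ?_
  have hgσ : Monotone (g ∘ σ) := hf.trans_monovary h.symm
  exact Perm.eq_one_of_monotone fun a b hab ↦ hg.le_iff_le.1 (hgσ hab)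

theorem Finset.prod_eq_zero_or_eq_pow_sum {ι M : Type*} [CommMonoidWithZero M] {s : Finset ι}
    {f : ι → M} {x : M} {e : ι → ℕ} (h : ∀ i ∈ s, f i = 0 ∨ f i = x ^ e i) :
    ∏ i ∈ s, f i = 0 ∨ ∏ i ∈ s, f i = x ^ ∑ i ∈ s, e i := by
  by_cases hpow : ∀ i ∈ s, f i = x ^ e i
  · exact .inr ((prod_congr rfl hpow).trans (prod_pow_eq_pow_sum s e x))
  · push Not at hpow
    obtain ⟨i, hi, hne⟩ := hpow
    exact .inl (prod_eq_zero hi ((h i hi).resolve_right hne))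

theorem Matrix.det_monic_of_eq_zero_or_X_pow {ι R : Type*} [Fintype ι] [DecidableEq ι]
    [CommRing R] [Nontrivial R] (M : Matrix ι ι R[X]) (e : ι → ι → ℕ)
    (hM : ∀ i j, M i j = 0 ∨ M i j = X ^ e i j) (hdiag : ∀ i, M i i = X ^ e i i)
    (hlt : ∀ σ : Perm ι, σ ≠ 1 → ∑ i, e (σ i) i < ∑ i, e i i) :
    M.det.Monic ∧ M.det.natDegree = ∑ i, e i i := by
  set D := ∑ i, e i i
  have hterm : ∀ σ : Perm ι, σ ≠ 1 → degree (Perm.sign σ • ∏ i, M (σ i) i) < D := by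
    intro σ hσ
    rw [Units.smul_def]
    refine (degree_smul_le _ _).trans_lt ?_
    rcases prod_eq_zero_or_eq_pow_sum fun i _ ↦ hM (σ i) i with h | h
    · rw [h, degree_zero]
      exact WithBot.bot_lt_coe D
    · rw [h, degree_X_pow]
      exact_mod_cast hlt σ hσ
  have hrest : degree (∑ σ ∈ univ.erase 1, Perm.sign σ • ∏ i, M (σ i) i) < D :=
    (degree_sum_le _ _).trans_lt <|
      (Finset.sup_lt_iff (WithBot.bot_lt_coe D)).2 fun σ hσ ↦ hterm σ (ne_of_mem_erase hσ)
  have hdet : M.det = X ^ D + ∑ σ ∈ univ.erase 1, Perm.sign σ • ∏ i, M (σ i) i := by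
    rw [det_apply, ← add_sum_erase _ _ (mem_univ 1)]
    simp [hdiag, D, prod_pow_eq_pow_sum]
  refine ⟨hdet ▸ monic_X_pow_add hrest, ?_⟩
  rw [hdet, natDegree_add_eq_left_of_degree_lt (by rwa [degree_X_pow]), natDegree_X_pow]

/-- Let `w_1 < w_2 < … < w_n` be natural numbers, and let `V'` be an `n × n` matrix over
`F[s]` whose diagonal entry `(i,i)` is `s^{i·w_i}` and whose off-diagonal entry `(i,j)`
is either `0` or `s^{j·w_i}` (index positions counted from 1).  Then `det V' ≠ 0` and
`deg (det V') = ∑_{i=1}^n i·w_i`. -/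
theorem det_vandermonde_with_zeros (F : Type*) [Field F] (n : ℕ)
    (w : Fin n → ℕ) (hw : StrictMono w)
    (V' : Matrix (Fin n) (Fin n) (Polynomial F))
    (hdiag : ∀ i : Fin n, V' i i = X ^ ((i.1 + 1) * w i))
    (hoff : ∀ i j : Fin n, i ≠ j → V' i j = 0 ∨ V' i j = X ^ ((j.1 + 1) * w i)) :
    V'.det ≠ 0 ∧ (V'.det).natDegree = ∑ i : Fin n, (i.1 + 1) * w i := by
  have hentry : ∀ i j, V' i j = 0 ∨ V' i j = X ^ ((j.1 + 1) * w i) := fun i j ↦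
    (eq_or_ne i j).elim (fun h ↦ h ▸ .inr (hdiag i)) (hoff i j)
  have hlt : ∀ σ : Perm (Fin n), σ ≠ 1 → ∑ i, (i.1 + 1) * w (σ i) < ∑ i, (i.1 + 1) * w i :=
    fun σ hσ ↦ StrictMono.sum_mul_comp_perm_lt_sum_mul (fun i j h ↦ by simpa using h) hw hσ
  obtain ⟨hmonic, hdeg⟩ := V'.det_monic_of_eq_zero_or_X_pow _ hentry hdiag hlt
  exact ⟨hmonic.ne_zero, hdeg⟩
end

section
/- Let A be a k×N matrix of rank k over a field F, with columns indexed by a finite set of monomials, and let wt be a weight function assigning distinct natural-number weights to distinct columns. For a k-element subset S of columns, indexed so that its members x^{e_1},…,x^{e_k} satisfy wt(x^{e_1}) < wt(x^{e_2}) < … < wt(x^{e_k}), define wt(S) = Σ_{i=1}^{k} i·wt(x^{e_i}). Then among all k-element column subsets S for which the k×k minor det(A[S]) is nonzero, there is a unique one of maximum weight wt(S). -/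
/-!
The sets of columns with a nonzero minor are the bases of the column matroid of `A`. As `wt` is
injective, `2 * wtSet S = ∑_{a,b ∈ S} max (wt a) (wt b) + ∑_{c ∈ S} wt c`, which is monotone in
the weights of the members of `S`; so replacing a column of a basis by a heavier one strictly
increases `wtSet`. If two distinct bases `S`, `T` both had maximal weight, let `x` be the
heaviest column of `S ∆ T`, say `x ∈ S`. Writing column `x` in the basis `T`, some column
`y ∈ T \ S` occurs with a nonzero coefficient (otherwise `x` depends on `S \ {x}`), so
`T - y + x` is again a basis; as `wt y < wt x`, it is heavier than `T`.
-/

open Finset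

/-- The weight of a `k`-element set `S` of columns: if the elements of `S` are
`c_1, …, c_k` listed so that `wt c_1 < wt c_2 < … < wt c_k`, then
`wtSet S = ∑ i, i * wt c_i`.  (Equivalently, each `c ∈ S` is counted with multiplicity
equal to its rank in `S`, i.e. the number of elements of `S` of weight at most `wt c`;
this agrees with the sorted description since `wt` is injective on the column set.) -/
noncomputable def wtSet {ι : Type*} [Fintype ι] (wt : ι → ℕ) (S : Finset ι) : ℕ :=
  ∑ c ∈ S, (S.filter fun c' => wt c' ≤ wt c).card * wt c

/-- `S` indexes a nonzero `k × k` minor of `A`: listing the columns of `S` in some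
(equivalently, any) order `g : Fin k → ι` gives a `k × k` submatrix with nonzero
determinant. -/
def nonzeroMinor {F ι : Type*} [Field F] [Fintype ι] {k : ℕ}
    (A : Matrix (Fin k) ι F) (S : Finset ι) : Prop :=
  ∃ g : Fin k → ι, (∀ i, g i ∈ S) ∧ Function.Injective g ∧
    (Matrix.of fun i j => A i (g j)).det ≠ 0

lemma Finset.image_swap_eq_insert_erase {α : Type*} [DecidableEq α] {S : Finset α} {x y : α}
    (hy : y ∈ S) (hx : x ∉ S) : S.image (Equiv.swap x y) = insert x (S.erase y) := by
  ext z
  simp only [mem_image, mem_insert, mem_erase]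
  constructor
  · rintro ⟨a, ha, rfl⟩
    rcases eq_or_ne a y with rfl | hay
    · simp
    · have hax : a ≠ x := ne_of_mem_of_not_mem ha hx
      simp [Equiv.swap_apply_of_ne_of_ne hax hay, hay, ha]
  · rintro (hzx | ⟨hzy, hz⟩)
    · exact ⟨y, hy, hzx ▸ Equiv.swap_apply_right x y⟩
    · exact ⟨z, hz, Equiv.swap_apply_of_ne_of_ne (ne_of_mem_of_not_mem hz hx) hzy⟩

section Weight

variable {ι : Type*} [Fintype ι] {wt : ι → ℕ}

lemma wtSet_eq_sum_product (S : Finset ι) :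
    wtSet wt S = ∑ p ∈ S ×ˢ S, if wt p.2 ≤ wt p.1 then wt p.1 else 0 := by
  rw [wtSet, sum_product]
  refine sum_congr rfl fun c _ => ?_
  simp only [← sum_filter, sum_const, smul_eq_mul]

lemma two_mul_wtSet (hwt : Function.Injective wt) (S : Finset ι) :
    2 * wtSet wt S = ∑ p ∈ S ×ˢ S, max (wt p.1) (wt p.2) + ∑ c ∈ S, wt c := by
  have hswap : wtSet wt S = ∑ p ∈ S ×ˢ S, if wt p.1 ≤ wt p.2 then wt p.2 else 0 := by
    rw [wtSet_eq_sum_product, sum_product, sum_product_right]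
  have hdiag : ∑ c ∈ S, wt c = ∑ p ∈ S ×ˢ S, if wt p.1 = wt p.2 then wt p.1 else 0 := by
    rw [sum_product]
    refine sum_congr rfl fun c hc => ?_
    rw [sum_eq_single_of_mem c hc fun b _ hbc => if_neg (hwt.ne hbc).symm, if_pos rfl]
  rw [two_mul, hdiag]
  nth_rw 1 [wtSet_eq_sum_product]
  rw [hswap, ← sum_add_distrib, ← sum_add_distrib]
  refine sum_congr rfl fun p _ => ?_
  split_ifs <;> omega

lemma wtSet_lt_wtSet_image [DecidableEq ι] (hwt : Function.Injective wt) {S : Finset ι}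
    {e : ι → ι} (he : Set.InjOn e S) (hle : ∀ z ∈ S, wt z ≤ wt (e z)) {y : ι} (hy : y ∈ S)
    (hlt : wt y < wt (e y)) :
    wtSet wt S < wtSet wt (S.image e) := by
  have hmax : ∑ p ∈ S ×ˢ S, max (wt p.1) (wt p.2)
      ≤ ∑ p ∈ S.image e ×ˢ S.image e, max (wt p.1) (wt p.2) := by
    rw [sum_product, sum_product, sum_image he]
    refine sum_le_sum fun a ha => ?_
    rw [sum_image he]
    exact sum_le_sum fun b hb => max_le_max (hle a ha) (hle b hb)
  have hsum : ∑ c ∈ S, wt c < ∑ c ∈ S.image e, wt c := by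
    rw [sum_image he]
    exact sum_lt_sum hle ⟨y, hy, hlt⟩
  have := two_mul_wtSet hwt S
  have := two_mul_wtSet hwt (S.image e)
  omega

lemma wtSet_lt_wtSet_insert_erase [DecidableEq ι] (hwt : Function.Injective wt)
    {S : Finset ι} {x y : ι} (hy : y ∈ S) (hx : x ∉ S) (hxy : wt y < wt x) :
    wtSet wt S < wtSet wt (insert x (S.erase y)) := by
  rw [← Finset.image_swap_eq_insert_erase hy hx]
  refine wtSet_lt_wtSet_image hwt (Equiv.swap x y).injective.injOn (fun z hz => ?_) hy
    (by rwa [Equiv.swap_apply_right])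
  rcases eq_or_ne z y with rfl | hzy
  · rw [Equiv.swap_apply_right]
    exact hxy.le
  · rw [Equiv.swap_apply_of_ne_of_ne (ne_of_mem_of_not_mem hz hx) hzy]

end Weight

theorem LinearIndepOn.exists_linearIndepOn_exchange {K V ι : Type*} [DivisionRing K]
    [AddCommGroup V] [Module K V] {v : ι → V} {S T : Set ι} {x : ι}
    (hS : LinearIndepOn K v S) (hT : LinearIndepOn K v T) (hxS : x ∈ S) (hxT : x ∉ T)
    (hx : v x ∈ Submodule.span K (v '' T)) :
    ∃ y ∈ T \ S, LinearIndepOn K v (insert x (T \ {y})) := by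
  obtain ⟨r, hrT, hr⟩ := (Finsupp.mem_span_image_iff_linearCombination K).mp hx
  obtain ⟨y, hyr, hyS⟩ : ∃ y, r y ≠ 0 ∧ y ∉ S := by
    by_contra! hrS
    refine hS.notMem_span hxS ((Finsupp.mem_span_image_iff_linearCombination K).mpr
      ⟨r, fun y hy => ⟨hrS y (Finsupp.mem_support_iff.mp hy), ?_⟩, hr⟩)
    exact fun hyx : y = x => hxT (hyx ▸ hrT hy)
  refine ⟨y, ⟨hrT (Finsupp.mem_support_iff.mpr hyr), hyS⟩, ?_⟩
  rw [linearIndepOn_insert fun h => hxT h.1]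
  refine ⟨hT.mono Set.sdiff_subset, fun hmem => hyr ?_⟩
  obtain ⟨s, hsT, hs⟩ := (Finsupp.mem_span_image_iff_linearCombination K).mp hmem
  have hrs : r = s := linearIndepOn_iffₛ.mp hT r hrT s
    (Finsupp.supported_mono Set.sdiff_subset hsT) (hr.trans hs.symm)
  rw [hrs]
  exact Finsupp.notMem_support_iff.mp fun h => (hsT h).2 rfl

theorem Matrix.det_of_cols_ne_zero_iff {m n K : Type*} [Fintype m] [DecidableEq m] [Field K]
    (A : Matrix m n K) (g : m → n) :
    (Matrix.of fun i j => A i (g j)).det ≠ 0 ↔ LinearIndependent K (A.col ∘ g) := by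
  rw [← isUnit_iff_ne_zero, ← Matrix.isUnit_iff_isUnit_det,
    ← Matrix.linearIndependent_cols_iff_isUnit]
  rfl

section Minor

variable {F ι : Type*} [Field F] [Fintype ι] {k : ℕ} (A : Matrix (Fin k) ι F)

lemma nonzeroMinor_iff_linearIndepOn {S : Finset ι} (hS : S.card = k) :
    nonzeroMinor A S ↔ LinearIndepOn F A.col (S : Set ι) := by
  constructor
  · rintro ⟨g, hgS, hg, hdet⟩
    have hrange : Set.range g = S := by
      classical
      rw [← Set.image_univ, ← coe_univ, ← coe_image, coe_inj]
      refine eq_of_subset_of_card_le (fun c hc => ?_) ?_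
      · obtain ⟨i, -, rfl⟩ := mem_image.mp hc
        exact hgS i
      · rw [card_image_of_injective _ hg, card_univ, Fintype.card_fin, hS]
    rw [← hrange, linearIndepOn_range_iff hg]
    exact (A.det_of_cols_ne_zero_iff g).mp hdet
  · intro hind
    let e : Fin k ≃ S := (S.equivFinOfCardEq hS).symm
    refine ⟨fun i => e i, fun i => (e i).2, Subtype.val_injective.comp e.injective, ?_⟩
    exact (A.det_of_cols_ne_zero_iff _).mpr (hind.linearIndependent.comp e e.injective)

lemma exists_nonzeroMinor (hA : A.rank = k) :
    ∃ S : Finset ι, S.card = k ∧ nonzeroMinor A S := by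
  classical
  obtain ⟨b, -, -, hspan, hb⟩ :=
    exists_linearIndepOn_extension (linearIndepOn_empty F A.col) (Set.empty_subset Set.univ)
  have hcard : b.toFinset.card = k := by
    have hbspan : Submodule.span F (A.col '' b) = Submodule.span F (Set.range A.col) :=
      le_antisymm (Submodule.span_mono (Set.image_subset_range _ _))
        (Submodule.span_le.mpr (Set.image_univ ▸ hspan))
    rw [← hA, Matrix.rank_eq_finrank_span_cols, ← hbspan, Set.image_eq_range,
      finrank_span_eq_card hb.linearIndependent, Set.toFinset_card]
  refine ⟨b.toFinset, hcard, (nonzeroMinor_iff_linearIndepOn A hcard).mpr (by simpa using hb)⟩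

lemma exists_nonzeroMinor_insert_erase [DecidableEq ι] {S T : Finset ι} (hS : S.card = k)
    (hSA : nonzeroMinor A S) (hT : T.card = k) (hTA : nonzeroMinor A T) {x : ι} (hxS : x ∈ S)
    (hxT : x ∉ T) :
    ∃ y ∈ T, y ∉ S ∧ (insert x (T.erase y)).card = k ∧
      nonzeroMinor A (insert x (T.erase y)) := by
  rw [nonzeroMinor_iff_linearIndepOn A hS] at hSA
  rw [nonzeroMinor_iff_linearIndepOn A hT] at hTA
  have hspan : Submodule.span F (A.col '' T) = ⊤ := by
    rw [Set.image_eq_range]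
    exact hTA.linearIndependent.span_eq_top_of_card_eq_finrank' (by simp [hT])
  obtain ⟨y, ⟨hyT, hyS⟩, hind⟩ :=
    hSA.exists_linearIndepOn_exchange hTA hxS hxT (hspan ▸ Submodule.mem_top)
  have hcard : (insert x (T.erase y)).card = k := by
    have := card_pos.mpr ⟨y, hyT⟩
    rw [card_insert_of_notMem fun h => hxT (mem_of_mem_erase h), card_erase_of_mem hyT]
    omega
  refine ⟨y, hyT, hyS, hcard, (nonzeroMinor_iff_linearIndepOn A hcard).mpr ?_⟩
  simpa using hind

lemma exists_nonzeroMinor_wtSet_lt [DecidableEq ι] {wt : ι → ℕ}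
    (hwt : Function.Injective wt) {S T : Finset ι} (hS : S.card = k) (hSA : nonzeroMinor A S)
    (hT : T.card = k) (hTA : nonzeroMinor A T) {x : ι} (hxS : x ∈ S) (hxT : x ∉ T)
    (hx : ∀ y ∈ T, y ∉ S → wt y ≤ wt x) :
    ∃ T' : Finset ι, T'.card = k ∧ nonzeroMinor A T' ∧ wtSet wt T < wtSet wt T' := by
  obtain ⟨y, hyT, hyS, hcard, hminor⟩ :=
    exists_nonzeroMinor_insert_erase A hS hSA hT hTA hxS hxT
  have hyx : wt y < wt x := (hx y hyT hyS).lt_of_ne (hwt.ne (ne_of_mem_of_not_mem hyT hxT))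
  exact ⟨_, hcard, hminor, wtSet_lt_wtSet_insert_erase hwt hyT hxT hyx⟩

end Minor

/-- Let `A` be a `k × N` matrix of rank `k` over a field `F`, whose columns are indexed
by a finite set of monomials, and let `wt` assign distinct natural-number weights to
distinct columns.  Then among all `k`-element column subsets `S` with `det (A[S]) ≠ 0`,
there is a unique one of maximum weight `wtSet S`. -/
theorem unique_max_weight_nonzero_minor {F ι : Type*} [Field F] [Fintype ι] (k : ℕ)
    (A : Matrix (Fin k) ι F) (hA : A.rank = k)
    (wt : ι → ℕ) (hwt : Function.Injective wt) :
    ∃! S : Finset ι, S.card = k ∧ nonzeroMinor A S ∧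
      ∀ S' : Finset ι, S'.card = k → nonzeroMinor A S' → wtSet wt S' ≤ wtSet wt S := by
  classical
  let bases := (univ : Finset (Finset ι)).filter fun S => S.card = k ∧ nonzeroMinor A S
  obtain ⟨S₀, hS₀⟩ := exists_nonzeroMinor A hA
  obtain ⟨S, hS, hSmax⟩ :=
    exists_max_image bases (wtSet wt) ⟨S₀, by simpa [bases] using hS₀⟩
  simp only [bases, mem_filter, mem_univ, true_and, and_imp] at hS hSmax
  refine ⟨S, ⟨hS.1, hS.2, hSmax⟩, ?_⟩
  rintro T ⟨hT, hTA, hTmax⟩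
  by_contra hTS
  obtain ⟨x, hx, hxmax⟩ := exists_max_image (symmDiff T S) wt (symmDiff_nonempty.mpr hTS)
  rcases mem_symmDiff.mp hx with ⟨hxT, hxS⟩ | ⟨hxS, hxT⟩
  · obtain ⟨S', hS', hS'A, hlt⟩ := exists_nonzeroMinor_wtSet_lt A hwt hT hTA hS.1 hS.2 hxT hxS
      fun y hyS hyT => hxmax y (mem_symmDiff.mpr (Or.inr ⟨hyS, hyT⟩))
    exact (hSmax S' hS' hS'A).not_gt hlt
  · obtain ⟨T', hT', hT'A, hlt⟩ := exists_nonzeroMinor_wtSet_lt A hwt hS.1 hS.2 hT hTA hxS hxT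
      fun y hyT hyS => hxmax y (mem_symmDiff.mpr (Or.inl ⟨hyT, hyS⟩))
    exact (hTmax T' hT' hT'A).not_gt hlt
end

section
/- Let A be a matrix over a field F with k rows and columns indexed by the exponent vectors e ∈ ℕ^n with 1 ≤ |e| ≤ D, and suppose A has rank k over F. Let w: {1,…,n} → ℕ be such that the weights wt(e) = Σ_{i=1}^n w(i)·e_i are distinct for distinct exponent vectors e with |e| ≤ D. Let M_Φ be the matrix over F[s] (s a formal variable) whose rows are indexed by the same exponent vectors e and whose columns are indexed by pairs (i,d) with i ∈ {1,…,k} and 1 ≤ d ≤ D, with entry M_Φ(e,(i,d)) = s^{i·wt(e)} if |e| = d and 0 otherwise. Then the rank of A·M_Φ over the rational function field F(s) equals k. -/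
/-!
Write `p_j = ∑_e A j e · t^{wt e}` for the rows of `A`; since `wt` is injective these are `k`
linearly independent polynomials. Summing the columns `(i, d)` of `M_Φ` over `d` turns `A · M_Φ`
into the matrix `(p_j(s^i))_{j,i}`, so it suffices that this square matrix is invertible. Row
operations over `F` bring the `p_j` into echelon form, i.e. with strictly increasing degrees
`d_1 < ⋯ < d_k`. Then in the Leibniz expansion of `det (p_j(s^i))` the identity permutation alone
contributes to the coefficient of `s^{∑ i d_i}`: every other permutation has strictly smaller
degree `∑ i d_{σ i}` by the rearrangement inequality.
-/

open Polynomial Matrix Finset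

theorem StrictMono.sum_mul_comp_perm_lt {ι α : Type*} [LinearOrder ι] [Fintype ι]
    [CommSemiring α] [LinearOrder α] [IsStrictOrderedRing α] [ExistsAddOfLE α]
    {f g : ι → α} (hf : StrictMono f) (hg : StrictMono g) {σ : Equiv.Perm ι} (hσ : σ ≠ 1) :
    ∑ i, f i * g (σ i) < ∑ i, f i * g i := by
  simp only [← smul_eq_mul]
  refine (hf.monotone.monovary hg.monotone).sum_smul_comp_perm_lt_sum_smul_iff.2 fun h ↦ hσ ?_
  have hσ_mono : Monotone σ := fun a b hab ↦ hg.le_iff_le.1 (hf.trans_monovary h.symm hab)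
  exact Equiv.ext fun i ↦ (hσ_mono.strictMono_of_injective σ.injective).apply_eq

namespace Polynomial

theorem det_expand_ne_zero {R : Type*} [CommRing R] [IsDomain R] {k : ℕ} {q : Fin k → R[X]}
    (hq : ∀ j, q j ≠ 0) (hdeg : StrictMono fun j ↦ (q j).natDegree) :
    (Matrix.of fun j i : Fin k ↦ expand R (i.1 + 1) (q j)).det ≠ 0 := by
  set N := ∑ i : Fin k, (i.1 + 1) * (q i).natDegree
  have hexpand_deg (j i : Fin k) :
      (expand R (i.1 + 1) (q j)).natDegree = (i.1 + 1) * (q j).natDegree := by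
    rw [natDegree_expand, mul_comm]
  have hdiag : (∏ i, expand R (i.1 + 1) (q i)).natDegree = N := by
    rw [natDegree_prod _ _ fun i _ ↦ (expand_ne_zero i.1.succ_pos).2 (hq i)]
    exact sum_congr rfl fun i _ ↦ hexpand_deg i i
  have hoff (σ : Equiv.Perm (Fin k)) (hσ : σ ≠ 1) :
      (∏ i, expand R (i.1 + 1) (q (σ i))).natDegree < N :=
    calc _ ≤ ∑ i, (expand R (i.1 + 1) (q (σ i))).natDegree := natDegree_prod_le _ _
      _ = ∑ i : Fin k, (i.1 + 1) * (q (σ i)).natDegree := sum_congr rfl fun i _ ↦ hexpand_deg _ i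
      _ < N := (Fin.val_strictMono.add_const 1).sum_mul_comp_perm_lt hdeg hσ
  have hcoeff : (Matrix.of fun j i : Fin k ↦ expand R (i.1 + 1) (q j)).det.coeff N =
      ∏ i, (q i).leadingCoeff := by
    rw [det_apply, finsetSum_coeff, sum_eq_single_of_mem 1 (mem_univ _)]
    · simp only [Equiv.Perm.sign_one, one_smul, Equiv.Perm.one_apply, of_apply]
      rw [← hdiag, coeff_natDegree, leadingCoeff_prod]
      exact prod_congr rfl fun i _ ↦ leadingCoeff_expand i.1.succ_pos
    · intro σ _ hσ
      exact coeff_eq_zero_of_natDegree_lt ((natDegree_smul_le _ _).trans_lt (hoff σ hσ))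
  intro h
  rw [h, coeff_zero, eq_comm, prod_eq_zero_iff] at hcoeff
  obtain ⟨j, -, hj⟩ := hcoeff
  exact hq j (leadingCoeff_eq_zero.1 hj)

theorem exists_strictMono_natDegree_mem_span {F : Type*} [Field F] {k : ℕ} {p : Fin k → F[X]}
    (hp : LinearIndependent F p) :
    ∃ q : Fin k → F[X], (∀ j, q j ∈ Submodule.span F (Set.range p)) ∧ (∀ j, q j ≠ 0) ∧
      StrictMono fun j ↦ (q j).natDegree := by
  classical
  set V := Submodule.span F (Set.range p)
  set N := univ.sup fun j ↦ (p j).natDegree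
  have hVN : V ≤ degreeLE F N := Submodule.span_le.2 <| Set.range_subset_iff.2 fun j ↦
    mem_degreeLE.2 <| natDegree_le_iff_degree_le.1 <|
      le_sup (f := fun j ↦ (p j).natDegree) (mem_univ j)
  let S : Finset ℕ := (range (N + 1)).filter fun d ↦ ∃ v ∈ V, v ≠ 0 ∧ v.natDegree = d
  -- a nonzero `v ∈ V` is detected by its coefficient at `natDegree v ∈ S`
  let coeffs : V →ₗ[F] S → F := LinearMap.pi fun d ↦ (lcoeff F d).comp V.subtype
  have hinj : Function.Injective coeffs := by
    refine (injective_iff_map_eq_zero _).2 fun v hv ↦ Subtype.ext ?_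
    by_contra hv0
    have hS : v.1.natDegree ∈ S := mem_filter.2 ⟨mem_range_succ_iff.2 <|
      natDegree_le_iff_degree_le.2 <| mem_degreeLE.1 (hVN v.2), v, v.2, hv0, rfl⟩
    exact hv0 (leadingCoeff_eq_zero.1 (congrFun hv ⟨_, hS⟩))
  have hk : k ≤ S.card := calc
    k = Module.finrank F V := by rw [finrank_span_eq_card hp, Fintype.card_fin]
    _ ≤ Module.finrank F (S → F) := LinearMap.finrank_le_finrank_of_injective hinj
    _ = S.card := by simp
  have hwit (j : Fin k) : ∃ v ∈ V, v ≠ 0 ∧ v.natDegree = S.orderEmbOfCardLe hk j :=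
    (mem_filter.1 (S.orderEmbOfCardLe_mem hk j)).2
  choose q hqV hq0 hqdeg using hwit
  exact ⟨q, hqV, hq0, fun a b hab ↦ by simpa [hqdeg] using (S.orderEmbOfCardLe hk).strictMono hab⟩

section SumMonomials

variable (R : Type*) [CommSemiring R] {E : Type*} [Fintype E]

noncomputable def sumMonomials (wt : E → ℕ) : (E → R) →ₗ[R] R[X] :=
  ∑ e, (monomial (wt e)).comp (LinearMap.proj e)

variable {R}

@[simp]
theorem sumMonomials_apply (wt : E → ℕ) (v : E → R) :
    sumMonomials R wt v = ∑ e, monomial (wt e) (v e) := by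
  simp [sumMonomials]

theorem coeff_sumMonomials {wt : E → ℕ} (hwt : Function.Injective wt) (v : E → R) (e : E) :
    (sumMonomials R wt v).coeff (wt e) = v e := by
  classical
  simp [coeff_monomial, hwt.eq_iff]

theorem sumMonomials_injective {wt : E → ℕ} (hwt : Function.Injective wt) :
    Function.Injective (sumMonomials R wt) := fun v v' h ↦ by
  ext e
  rw [← coeff_sumMonomials hwt v, h, coeff_sumMonomials hwt]

theorem map_C_mul_of_X_pow_eq_expand {m ι : Type*} (B : Matrix m E R) (wt : E → ℕ) (n : ι → ℕ) :
    B.map C * (Matrix.of fun e i ↦ X ^ (n i * wt e) : Matrix E ι R[X]) =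
      Matrix.of fun j i ↦ expand R (n i) (sumMonomials R wt (B j)) := by
  refine Matrix.ext fun j i ↦ ?_
  simp only [Matrix.mul_apply, map_apply, of_apply, sumMonomials_apply, map_sum, expand_monomial]
  exact sum_congr rfl fun e _ ↦ by rw [C_mul_X_pow_eq_monomial, mul_comm]

end SumMonomials

end Polynomial

section Condenser

variable (F : Type*) [Field F] {E : Type*}

-- `M_Φ`, with the column `(i, d)` of the paper encoded as `(i - 1, d - 1) : Fin k × Fin D`
noncomputable def condenserMatrix (k D : ℕ) (wt deg : E → ℕ) :
    Matrix E (Fin k × Fin D) (RatFunc F) :=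
  Matrix.of fun e p ↦
    if deg e = p.2.1 + 1 then algebraMap F[X] (RatFunc F) (X ^ ((p.1.1 + 1) * wt e)) else 0

variable {F}

theorem condenserMatrix_mul_sum_degrees {k D : ℕ} {wt deg : E → ℕ}
    (hdeg : ∀ e, deg e ∈ Set.Icc 1 D) :
    condenserMatrix F k D wt deg *
        (Matrix.of fun (p : Fin k × Fin D) (i : Fin k) ↦ if p.1 = i then (1 : RatFunc F) else 0) =
      (Matrix.of fun e (i : Fin k) ↦ (X ^ ((i.1 + 1) * wt e) : F[X])).map
        (algebraMap F[X] (RatFunc F)) := by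
  refine Matrix.ext fun e i ↦ ?_
  obtain ⟨h1, hD⟩ := hdeg e
  rw [Matrix.mul_apply, Fintype.sum_prod_type]
  simp only [condenserMatrix, of_apply, map_apply, mul_ite, mul_one, mul_zero]
  rw [Fintype.sum_eq_single i fun x hx ↦ by simp [hx],
    Fintype.sum_eq_single (⟨deg e - 1, by omega⟩ : Fin D) fun d hd ↦ ?_]
  · rw [if_pos rfl, if_pos (by simp only; omega)]
  · rw [if_pos rfl, if_neg fun h ↦ hd (Fin.ext (by simp [h]))]

theorem rank_map_mul_condenserMatrix [Fintype E] {k D : ℕ} (A : Matrix (Fin k) E F)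
    (hA : A.rank = k) {wt : E → ℕ} (hwt : Function.Injective wt) {deg : E → ℕ}
    (hdeg : ∀ e, deg e ∈ Set.Icc 1 D) :
    (A.map (algebraMap F (RatFunc F)) * condenserMatrix F k D wt deg).rank = k := by
  classical
  set φ := algebraMap F[X] (RatFunc F)
  have hrows : LinearIndependent F A.row := by
    rw [linearIndependent_iff_card_eq_finrank_span, Set.finrank, ← rank_eq_finrank_span_row, hA,
      Fintype.card_fin]
  obtain ⟨q, hq_span, hq0, hq_deg⟩ := exists_strictMono_natDegree_mem_span
    (hrows.map' (sumMonomials F wt) (LinearMap.ker_eq_bot.2 (sumMonomials_injective hwt)))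
  obtain ⟨Q, hQ⟩ : ∃ Q : Matrix (Fin k) (Fin k) F, ∀ j, q j = sumMonomials F wt ((Q * A) j) := by
    choose Q hQ using fun j ↦ (Submodule.mem_span_range_iff_exists_fun F).1 (hq_span j)
    refine ⟨Matrix.of Q, fun j ↦ ?_⟩
    rw [← hQ j, mul_apply_eq_vecMul, vecMul_eq_sum, map_sum]
    simp
  have hreduce : Q.map (algebraMap F (RatFunc F)) *
      (A.map (algebraMap F (RatFunc F)) * condenserMatrix F k D wt deg) *
      (Matrix.of fun (p : Fin k × Fin D) (i : Fin k) ↦ if p.1 = i then (1 : RatFunc F) else 0) =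
      (Matrix.of fun j i : Fin k ↦ expand F (i.1 + 1) (q j)).map φ := by
    have hmap : (Q * A).map (algebraMap F (RatFunc F)) = ((Q * A).map C).map φ := by
      rw [Matrix.map_map, ← algebraMap_eq, ← RingHom.coe_comp, ← IsScalarTower.algebraMap_eq]
    rw [Matrix.mul_assoc, Matrix.mul_assoc, condenserMatrix_mul_sum_degrees hdeg,
      ← Matrix.mul_assoc, ← Matrix.map_mul, hmap, ← Matrix.map_mul, map_C_mul_of_X_pow_eq_expand]
    simp only [hQ]
  have hdet : ((Matrix.of fun j i : Fin k ↦ expand F (i.1 + 1) (q j)).map φ).det ≠ 0 := by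
    rw [← RingHom.mapMatrix_apply, ← RingHom.map_det]
    exact (map_ne_zero_iff φ (IsFractionRing.injective F[X] (RatFunc F))).2
      (det_expand_ne_zero hq0 hq_deg)
  refine le_antisymm ((rank_le_card_height _).trans_eq (Fintype.card_fin k)) ?_
  calc k = _ := by rw [rank_of_det_ne_zero hdet, Fintype.card_fin]
    _ = _ := congrArg rank hreduce.symm
    _ ≤ _ := rank_mul_le_left _ _
    _ ≤ _ := rank_mul_le_right _ _

end Condenser

/-- **Rank condenser.**  Let `A` be a `k`-row matrix over a field `F` whose columns are
indexed by the exponent vectors `e ∈ ℕ^n` with `1 ≤ |e| ≤ D` (faithfully encoded here as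
functions `Fin n → Fin (D+1)`, since every such vector has all entries at most `D`), and
suppose `A` has rank `k`.  Let `w : Fin n → ℕ` be such that the weights
`wt(e) = ∑ i, w i * e i` are distinct for distinct exponent vectors of degree at most `D`.
Let `M_Φ` be the matrix over `F[s]` with rows indexed by the same exponent vectors and
columns indexed by pairs `(i, d)` with `i ∈ {1,…,k}` and `1 ≤ d ≤ D` (encoded as
`Fin k × Fin D`, the pair `(i,d)` corresponding to `(i.1+1, d.1+1)`), whose entry at
`(e, (i,d))` is `s^{i·wt(e)}` if `|e| = d` and `0` otherwise.  Then the rank of `A · M_Φ`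
over the rational function field `F(s)` equals `k`. -/
theorem rank_condenser (F : Type*) [Field F] (n k D : ℕ)
    (A : Matrix (Fin k)
      {e : Fin n → Fin (D + 1) // 1 ≤ ∑ i, (e i : ℕ) ∧ ∑ i, (e i : ℕ) ≤ D} F)
    (hA : A.rank = k)
    (w : Fin n → ℕ)
    (hw : ∀ e e' : Fin n → Fin (D + 1), (∑ i, (e i : ℕ)) ≤ D → (∑ i, (e' i : ℕ)) ≤ D →
      (∑ i, w i * (e i : ℕ)) = (∑ i, w i * (e' i : ℕ)) → e = e') :
    ((A.map (algebraMap F (RatFunc F))) *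
      (Matrix.of fun (e : {e : Fin n → Fin (D + 1) // 1 ≤ ∑ i, (e i : ℕ) ∧ ∑ i, (e i : ℕ) ≤ D})
          (p : Fin k × Fin D) =>
        if (∑ i, ((e : Fin n → Fin (D + 1)) i : ℕ)) = p.2.1 + 1 then
          algebraMap (Polynomial F) (RatFunc F)
            (X ^ ((p.1.1 + 1) * ∑ i, w i * ((e : Fin n → Fin (D + 1)) i : ℕ)))
        else 0)).rank = k :=
  rank_map_mul_condenserMatrix A hA (wt := fun e ↦ ∑ i, w i * (e.1 i : ℕ))
    (fun e e' h ↦ Subtype.ext (hw _ _ e.2.2 e'.2.2 h)) (deg := fun e ↦ ∑ i, (e.1 i : ℕ))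
    fun e ↦ e.2
end

section
/- Let F be an algebraically closed field and K an extension field of F. Let g_1,…,g_k ∈ K[y_1,…,y_n] be F-algebraically dependent, i.e., there is a nonzero A ∈ F[z_1,…,z_k] with A(g_1,…,g_k) = 0. Let v = (v_1,…,v_n) be fresh variables and, for a positive integer t, set H_t(g_i) ∈ K[v][y] to be the truncation to y-degree at most t of g_i(y+v) − g_i(v). Then for every positive integer t there exist α_1,…,α_k, not all zero, in the subfield F(g_1(v),…,g_k(v)) of K(v) generated over F by g_1(v),…,g_k(v), such that Σ_{i=1}^k α_i · H_t(g_i) ≡ 0 modulo the F(g_1(v),…,g_k(v))-linear span of all products H_t(g_{i_1})⋯H_t(g_{i_r}) with r ≥ 2 plus the ideal ⟨y_1,…,y_n⟩^{t+1}. -/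
noncomputable section

/-- The (total) degree of a monomial `m`, i.e. `|m| = ∑ i, m i`. -/
def mdeg {σ : Type*} (m : σ →₀ ℕ) : ℕ := m.sum fun _ e => e

/-- Truncation of a multivariate polynomial keeping exactly the terms of total degree
between `1` and `t`. -/
def truncLE {σ A : Type*} [CommSemiring A] (t : ℕ) (p : MvPolynomial σ A) :
    MvPolynomial σ A :=
  ∑ m ∈ p.support.filter (fun m => 1 ≤ mdeg m ∧ mdeg m ≤ t),
    MvPolynomial.monomial m (MvPolynomial.coeff m p)

/-- `Ht t g` is `H_t(g)`: the truncation to degree at most `t` (in the original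
variables `y`) of `g(y + v) − g(v)`, viewed as an element of `A[v][y]`.  Here the fresh
variables `v` are indexed by the same index set and live in the coefficient ring, the
substitution `y_j ↦ y_j + v_j` being `X j + C (X j)`, and `g(v)` being `C g`. -/
def Ht {n : ℕ} {A : Type*} [CommRing A] (t : ℕ) (g : MvPolynomial (Fin n) A) :
    MvPolynomial (Fin n) (MvPolynomial (Fin n) A) :=
  truncLE t
    (MvPolynomial.eval₂ ((MvPolynomial.C).comp (MvPolynomial.C))
      (fun j => MvPolynomial.X j + MvPolynomial.C (MvPolynomial.X j)) g
      - MvPolynomial.C g)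

/-!
Among the nonzero annihilators of `g` over `F` choose one, `A`, of least total degree. Some
`∂A/∂z_i` does not annihilate `g`: otherwise every `∂A/∂z_i` vanishes identically, which makes
`A` constant in characteristic zero, and in characteristic `p` makes `A = B ^ p` for an
annihilator `B` of smaller degree, because `F` is perfect.

Now expand `B(z) := A(z + g(v))`. Its coefficients lie in `F(g(v))`, its constant term is
`A(g(v)) = 0` and its linear coefficients are the `(∂A/∂z_i)(g(v))`, not all zero. As
`H_t(g_i) + g_i(v) ≡ g_i(y + v)` modulo `⟨y⟩^(t+1)`, the value `B(H_t(g))` is congruent to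
`A(g(y + v)) = 0`, and splitting it into its linear part and its part of degree `≥ 2` gives the
relation.
-/

open MvPolynomial Finsupp

namespace Finsupp

variable {σ : Type*}

theorem degree_tsub_single_add_one {m : σ →₀ ℕ} {i : σ} (hi : m i ≠ 0) :
    (m - single i 1).degree + 1 = m.degree := by
  conv_rhs => rw [← tsub_add_cancel_of_le (single_le_iff.mpr (Nat.one_le_iff_ne_zero.mpr hi))]
  rw [map_add, degree_single]

theorem exists_ne_zero_of_degree_ne_zero {m : σ →₀ ℕ} (h : m.degree ≠ 0) : ∃ i, m i ≠ 0 :=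
  Finsupp.ne_iff.mp fun h0 : m = 0 => h (by rw [h0, map_zero])

theorem exists_eq_single_of_degree_eq_one {m : σ →₀ ℕ} (h : m.degree = 1) :
    ∃ i, m = single i 1 := by
  obtain ⟨i, hi⟩ := exists_ne_zero_of_degree_ne_zero (h.trans_ne one_ne_zero)
  have hdeg := degree_tsub_single_add_one hi
  refine ⟨i, ?_⟩
  rw [← tsub_add_cancel_of_le (single_le_iff.mpr (Nat.one_le_iff_ne_zero.mpr hi)),
    (degree_eq_zero_iff (m - single i 1)).mp (by omega), zero_add]

end Finsupp

theorem Finset.exists_fin_sum_eq {ι M : Type*} [AddCommMonoid M] (s : Finset ι) (f : ι → M) :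
    ∃ (N : ℕ) (e : Fin N → ι), (∀ j, e j ∈ s) ∧ ∑ x ∈ s, f x = ∑ j, f (e j) :=
  ⟨s.card, fun j => s.equivFin.symm j, fun j => (s.equivFin.symm j).2, by
    rw [← s.sum_coe_sort]
    exact (Fintype.sum_equiv s.equivFin.symm _ _ fun _ => rfl).symm⟩

namespace MvPolynomial

section CommSemiring

variable {σ R : Type*} [CommSemiring R]

theorem coeff_mul_cast_eq_zero_of_pderiv_eq_zero {A : MvPolynomial σ R}
    (h : ∀ i, pderiv i A = 0) (m : σ →₀ ℕ) (i : σ) : coeff m A * (m i : R) = 0 := by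
  obtain hmi | hmi := Nat.eq_zero_or_pos (m i)
  · simp [hmi]
  have hm : m - single i 1 + single i 1 = m := tsub_add_cancel_of_le (single_le_iff.mpr hmi)
  have hcoeff := coeff_pderiv (i := i) A (m - single i 1)
  rw [h i, coeff_zero, hm] at hcoeff
  rw [hcoeff, tsub_apply, single_eq_same]
  norm_cast
  rw [Nat.sub_add_cancel hmi]

theorem totalDegree_pderiv_lt {A : MvPolynomial σ R} {i : σ} (h : pderiv i A ≠ 0) :
    (pderiv i A).totalDegree < A.totalDegree := by
  have key : ∀ m ∈ (pderiv i A).support, m.degree + 1 ≤ A.totalDegree := fun m hm => by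
    rw [mem_support_iff, coeff_pderiv] at hm
    have : (m + single i 1).degree ≤ A.totalDegree :=
      le_totalDegree (mem_support_iff.mpr (left_ne_zero_of_mul hm))
    simpa using this
  obtain ⟨m, hm⟩ := support_nonempty.mpr h
  have := key m hm
  exact (Finset.sup_le fun m hm => Nat.le_sub_one_of_lt (key m hm)).trans_lt (by omega)

theorem exists_pow_eq_of_dvd_exponents (p : ℕ) [Fact p.Prime] [CharP R p] [PerfectRing R p]
    {A : MvPolynomial σ R} (h : ∀ m ∈ A.support, ∀ i, p ∣ m i) : ∃ B, B ^ p = A := by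
  refine ⟨∑ m ∈ A.support, monomial (mapRange (· / p) (Nat.zero_div p) m)
    ((frobeniusEquiv R p).symm (coeff m A)), ?_⟩
  rw [sum_pow_char]
  conv_rhs => rw [A.as_sum]
  refine Finset.sum_congr rfl fun m hm => ?_
  rw [monomial_pow, frobeniusEquiv_symm_pow_p]
  congr 2
  ext j
  simpa using Nat.mul_div_cancel' (h m hm j)

theorem eq_C_add_sum_monomial_single_add_sum [Fintype σ] (B : MvPolynomial σ R) :
    B = C (coeff 0 B) + ∑ i, monomial (single i 1) (coeff (single i 1) B) +
      ∑ m ∈ B.support with 2 ≤ m.degree, monomial m (coeff m B) := by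
  classical
  ext m
  simp only [coeff_add, coeff_C, coeff_sum, coeff_monomial, Finset.sum_ite_eq',
    Finset.mem_filter, MvPolynomial.mem_support_iff]
  rcases (by omega : m.degree = 0 ∨ m.degree = 1 ∨ 2 ≤ m.degree) with h | h | h
  · obtain rfl := (degree_eq_zero_iff m).mp h
    simp
  · obtain ⟨i, rfl⟩ := exists_eq_single_of_degree_eq_one h
    simp [single_eq_single_iff, eq_comm (a := (0 : σ →₀ ℕ))]
  · have h0 : m ≠ 0 := by rintro rfl; simp at h
    have h1 : ∀ i, single i 1 ≠ m := by rintro i rfl; simp at h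
    simp [h, h0.symm, h1]

theorem aeval_eq_add_sum_smul_add_sum [Fintype σ] {S : Type*} [CommSemiring S] [Algebra R S]
    (B : MvPolynomial σ R) (h : σ → S) :
    aeval h B = algebraMap R S (coeff 0 B) + ∑ i, coeff (single i 1) B • h i +
      ∑ m ∈ B.support with 2 ≤ m.degree, coeff m B • ∏ i, h i ^ m i := by
  conv_lhs => rw [eq_C_add_sum_monomial_single_add_sum B]
  simp only [map_add, map_sum, aeval_C, ← C_mul_X_eq_monomial, map_mul, aeval_X, aeval_monomial,
    Algebra.smul_def, Finsupp.prod_pow]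

theorem eval₂_sub_eval₂_mem {S : Type*} [CommRing S] (I : Ideal S) (f : R →+* S) {x y : σ → S}
    (h : ∀ i, x i - y i ∈ I) (p : MvPolynomial σ R) : eval₂ f x p - eval₂ f y p ∈ I := by
  rw [← Ideal.Quotient.eq, eval₂_comp_left, eval₂_comp_left]
  congr 1
  funext i
  exact Ideal.Quotient.eq.mpr (h i)

theorem monomial_mem_pow_span_X {d : ℕ} {m : σ →₀ ℕ} (hm : d ≤ m.degree) (a : R) :
    monomial m a ∈ Ideal.span (Set.range X) ^ d := by
  induction d generalizing m with
  | zero => simp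
  | succ d ih =>
    obtain ⟨i, hi⟩ := exists_ne_zero_of_degree_ne_zero (m := m) (by omega)
    have hdeg := degree_tsub_single_add_one hi
    rw [← tsub_add_cancel_of_le (single_le_iff.mpr (Nat.one_le_iff_ne_zero.mpr hi)),
      monomial_add_single, pow_one, pow_succ]
    exact Ideal.mul_mem_mul (ih (by omega)) (Ideal.subset_span ⟨i, rfl⟩)

theorem mem_pow_span_X_of_le_degree {d : ℕ} {q : MvPolynomial σ R}
    (h : ∀ m ∈ q.support, d ≤ m.degree) : q ∈ Ideal.span (Set.range X) ^ d := by
  rw [q.as_sum]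
  exact Ideal.sum_mem _ fun m hm => monomial_mem_pow_span_X (h m hm) _

theorem map_mem_pow_span_X {S : Type*} [CommSemiring S] (f : R →+* S) {d : ℕ}
    {q : MvPolynomial σ R} (hq : q ∈ Ideal.span (Set.range X) ^ d) :
    map f q ∈ Ideal.span (Set.range X) ^ d := by
  have hX : (map f : MvPolynomial σ R →+* MvPolynomial σ S) ∘ X = X := by
    funext i
    exact map_X f i
  have := Ideal.mem_map_of_mem (map f) hq
  rwa [Ideal.map_pow, Ideal.map_span, ← Set.range_comp, hX] at this

variable {S : Type*} [CommSemiring S]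

def shift (f : R →+* S) (s : σ → S) : MvPolynomial σ R →+* MvPolynomial σ S :=
  eval₂Hom (C.comp f) fun i => X i + C (s i)

@[simp] theorem shift_C (f : R →+* S) (s : σ → S) (a : R) : shift f s (C a) = C (f a) :=
  eval₂_C _ _ _

@[simp] theorem shift_X (f : R →+* S) (s : σ → S) (i : σ) : shift f s (X i) = X i + C (s i) :=
  eval₂_X _ _ _

theorem constantCoeff_shift (f : R →+* S) (s : σ → S) (p : MvPolynomial σ R) :
    constantCoeff (shift f s p) = eval₂ f s p := by
  show (constantCoeff.comp (shift f s)) p = eval₂Hom f s p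
  congr 1
  ext <;> simp

theorem pderiv_shift (f : R →+* S) (s : σ → S) (i : σ) (p : MvPolynomial σ R) :
    pderiv i (shift f s p) = shift f s (pderiv i p) := by
  classical
  induction p using MvPolynomial.induction_on with
  | C a => simp
  | add p q hp hq => simp only [map_add, hp, hq]
  | mul_X p j hp =>
    simp only [map_mul, shift_X, Derivation.leibniz, smul_eq_mul, map_add, pderiv_X, pderiv_C, hp,
      Pi.single_apply]
    split_ifs <;> simp

theorem coeff_single_one_shift (f : R →+* S) (s : σ → S) (i : σ) (p : MvPolynomial σ R) :
    coeff (single i 1) (shift f s p) = eval₂ f s (pderiv i p) := by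
  have := coeff_pderiv (i := i) (shift f s p) 0
  rw [zero_add, Finsupp.coe_zero, Pi.zero_apply, Nat.cast_zero, zero_add, mul_one] at this
  rw [← this, ← constantCoeff_eq, pderiv_shift, constantCoeff_shift]

theorem coeff_shift_mem {T : Subsemiring S} (f : R →+* S) (hf : ∀ a, f a ∈ T)
    {s : σ → S} (hs : ∀ i, s i ∈ T) (p : MvPolynomial σ R) (m : σ →₀ ℕ) :
    coeff m (shift f s p) ∈ T := by
  have : (map T.subtype).comp (shift (f.codRestrict T hf) fun i => ⟨s i, hs i⟩) = shift f s := by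
    ext <;> simp
  rw [← this, RingHom.comp_apply, coeff_map]
  exact SetLike.coe_mem _

theorem aeval_shift {L : Type*} [CommSemiring L] [Algebra S L] (f : R →+* S) (s : σ → S)
    (h : σ → L) (p : MvPolynomial σ R) :
    aeval h (shift f s p) =
      eval₂ ((algebraMap S L).comp f) (fun i => h i + algebraMap S L (s i)) p := by
  show ((aeval h).toRingHom.comp (shift f s)) p = eval₂Hom _ _ p
  congr 1
  ext <;> simp

end CommSemiring

section CommRing

variable {σ R : Type*} [CommRing R]

theorem totalDegree_pow_of_isDomain [IsDomain R] {B : MvPolynomial σ R}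
    (hB : B ≠ 0) (n : ℕ) : (B ^ n).totalDegree = n * B.totalDegree := by
  induction n with
  | zero => simp
  | succ n ih => rw [pow_succ, totalDegree_mul_of_isDomain (pow_ne_zero n hB) hB, ih]; ring

theorem exists_sum_coeff_single_smul_eq [Fintype σ] {S : Type*} [CommRing S] [Algebra R S]
    {B : MvPolynomial σ R} (hB0 : coeff 0 B = 0) (h : σ → S) :
    ∃ (M : ℕ) (e : Fin M → σ →₀ ℕ), (∀ j, 2 ≤ (e j).degree) ∧
      ∑ i, coeff (single i 1) B • h i = ∑ j, (-coeff (e j) B) • ∏ i, h i ^ e j i + aeval h B := by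
  obtain ⟨M, e, heS, hsum⟩ := (B.support.filter (2 ≤ ·.degree)).exists_fin_sum_eq
    fun m => coeff m B • ∏ i, h i ^ m i
  refine ⟨M, e, fun j => (Finset.mem_filter.mp (heS j)).2, ?_⟩
  rw [aeval_eq_add_sum_smul_add_sum, hB0, map_zero, zero_add, hsum]
  simp only [neg_smul, Finset.sum_neg_distrib]
  abel

end CommRing

theorem exists_prime_pow_eq_of_pderiv_eq_zero {F σ : Type*} [Field F] [PerfectField F]
    {A : MvPolynomial σ F} (h : ∀ i, pderiv i A = 0) (hA : A.totalDegree ≠ 0) :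
    ∃ p B, p.Prime ∧ B ^ p = A := by
  have hcast : ∀ m ∈ A.support, ∀ i, (m i : F) = 0 := fun m hm i =>
    (mul_eq_zero.mp (coeff_mul_cast_eq_zero_of_pderiv_eq_zero h m i)).resolve_left
      (MvPolynomial.mem_support_iff.mp hm)
  obtain ⟨p, hchar⟩ := CharP.exists F
  rcases CharP.char_is_prime_or_zero F p with hp | rfl
  · have := Fact.mk hp
    obtain ⟨B, hB⟩ := exists_pow_eq_of_dvd_exponents p fun m hm i =>
      (CharP.cast_eq_zero_iff F p _).mp (hcast m hm i)
    exact ⟨p, B, hp, hB⟩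
  · have := CharP.charP_to_charZero F
    refine absurd (Nat.eq_zero_of_le_zero (Finset.sup_le fun m hm => ?_)) hA
    have : m = 0 := by ext i; exact_mod_cast hcast m hm i
    simp [this]

end MvPolynomial

theorem exists_aeval_eq_zero_and_aeval_pderiv_ne_zero {F S ι : Type*} [Field F] [PerfectField F]
    [CommRing S] [IsDomain S] [Algebra F S] {g : ι → S} (hdep : ¬ AlgebraicIndependent F g) :
    ∃ A : MvPolynomial ι F, aeval g A = 0 ∧ ∃ i, aeval g (pderiv i A) ≠ 0 := by
  classical
  have hex : ∃ d, ∃ A : MvPolynomial ι F, A ≠ 0 ∧ aeval g A = 0 ∧ A.totalDegree = d := by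
    rw [algebraicIndependent_iff] at hdep
    push Not at hdep
    obtain ⟨A, hAg, hA0⟩ := hdep
    exact ⟨_, A, hA0, hAg, rfl⟩
  obtain ⟨A, hA0, hAg, hdeg⟩ := Nat.find_spec hex
  have hmin : ∀ B : MvPolynomial ι F, B ≠ 0 → aeval g B = 0 → A.totalDegree ≤ B.totalDegree :=
    fun B hB hBg => hdeg ▸ Nat.find_min' hex ⟨B, hB, hBg, rfl⟩
  refine ⟨A, hAg, ?_⟩
  by_contra! hder
  have hpderiv : ∀ i, pderiv i A = 0 := fun i => by
    by_contra hi
    exact (totalDegree_pderiv_lt hi).not_ge (hmin _ hi (hder i))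
  have hpos : A.totalDegree ≠ 0 := by
    intro h0
    have hC := totalDegree_eq_zero_iff_eq_C.mp h0
    rw [hC, aeval_C, map_eq_zero_iff _ (algebraMap F S).injective] at hAg
    exact hA0 (by rw [hC, hAg, map_zero])
  obtain ⟨p, B, hp, rfl⟩ := exists_prime_pow_eq_of_pderiv_eq_zero hpderiv hpos
  have hB0 : B ≠ 0 := by rintro rfl; exact hA0 (zero_pow hp.ne_zero)
  have hBg : aeval g B = 0 := (pow_eq_zero_iff hp.ne_zero).mp (by rw [← map_pow, hAg])
  have hle := hmin B hB0 hBg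
  rw [totalDegree_pow_of_isDomain hB0] at hle hpos
  have := hp.two_le
  have := Nat.pos_of_ne_zero hpos
  nlinarith

section Truncation

variable {σ : Type*}

theorem mdeg_eq_degree (m : σ →₀ ℕ) : mdeg m = m.degree := rfl

theorem coeff_truncLE {R : Type*} [CommSemiring R] (t : ℕ) (p : MvPolynomial σ R)
    (m : σ →₀ ℕ) :
    coeff m (truncLE t p) = if 1 ≤ m.degree ∧ m.degree ≤ t then coeff m p else 0 := by
  classical
  rw [truncLE, coeff_sum]
  simp only [coeff_monomial, Finset.sum_ite_eq', Finset.mem_filter, MvPolynomial.mem_support_iff]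
  simp only [mdeg_eq_degree]
  by_cases hm : coeff m p = 0 <;> simp [hm]

theorem sub_truncLE_mem_pow_span_X {R : Type*} [CommRing R] {p : MvPolynomial σ R}
    (hp : coeff 0 p = 0) (t : ℕ) :
    p - truncLE t p ∈ Ideal.span (Set.range X) ^ (t + 1) := by
  refine mem_pow_span_X_of_le_degree fun m hm => ?_
  by_contra! hlt
  rw [MvPolynomial.mem_support_iff, coeff_sub, coeff_truncLE] at hm
  obtain h0 | hpos := Nat.eq_zero_or_pos m.degree
  · obtain rfl := (degree_eq_zero_iff m).mp h0
    simp [hp] at hm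
  · rw [if_pos ⟨hpos, by omega⟩, sub_self] at hm
    exact hm rfl

theorem sub_Ht_mem_pow_span_X {R : Type*} [CommRing R] {n : ℕ} (t : ℕ)
    (g : MvPolynomial (Fin n) R) :
    shift C X g - C g - Ht t g ∈ Ideal.span (Set.range X) ^ (t + 1) :=
  sub_truncLE_mem_pow_span_X
    (by rw [coeff_sub, ← constantCoeff_eq, constantCoeff_shift, eval₂_eta, constantCoeff_C,
      sub_self]) t

theorem aeval_map_Ht_shift_mem_pow_span_X {F A L ι : Type*} [CommSemiring F] [CommRing A]
    [Algebra F A] [CommRing L] {n : ℕ} (f : MvPolynomial (Fin n) A →+* L)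
    {g : ι → MvPolynomial (Fin n) A} {P : MvPolynomial ι F} (hP : aeval g P = 0) (t : ℕ) :
    aeval (fun i => map f (Ht t (g i))) (shift (f.comp (algebraMap F _)) (fun i => f (g i)) P) ∈
      Ideal.span (Set.range X) ^ (t + 1) := by
  have hvanish := map_aeval g ((map f).comp (shift C X)) P
  have hcoef : ((map f).comp (shift C X)).comp (algebraMap F (MvPolynomial (Fin n) A)) =
      C.comp (f.comp (algebraMap F _)) :=
    RingHom.ext fun a => by
      simp only [RingHom.comp_apply, MvPolynomial.algebraMap_apply, shift_C, map_C]
  rw [hP, map_zero, hcoef] at hvanish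
  rw [aeval_shift, ← sub_zero (eval₂ _ _ P), hvanish]
  refine eval₂_sub_eval₂_mem _ _ (fun i => ?_) P
  convert neg_mem (map_mem_pow_span_X f (sub_Ht_mem_pow_span_X t (g i))) using 1
  simp only [map_sub, map_C, RingHom.comp_apply, algebraMap_eq]
  ring

end Truncation

theorem pss_dependence_general (F K : Type*) [Field F] [IsAlgClosed F] [Field K] [Algebra F K]
    (n k : ℕ) (g : Fin k → MvPolynomial (Fin n) K)
    (hdep : ¬ AlgebraicIndependent F g) (t : ℕ) :
    ∃ α : Fin k → FractionRing (MvPolynomial (Fin n) K),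
      α ≠ 0 ∧
      (∀ i, α i ∈ Subfield.closure
        (Set.range ((algebraMap (MvPolynomial (Fin n) K)
              (FractionRing (MvPolynomial (Fin n) K))).comp
            ((MvPolynomial.C : K →+* MvPolynomial (Fin n) K).comp (algebraMap F K))) ∪
          Set.range (fun i => algebraMap (MvPolynomial (Fin n) K)
            (FractionRing (MvPolynomial (Fin n) K)) (g i)))) ∧
      ∃ (M : ℕ) (c : Fin M → FractionRing (MvPolynomial (Fin n) K))
        (e : Fin M → Fin k → ℕ)
        (q : MvPolynomial (Fin n) (FractionRing (MvPolynomial (Fin n) K))),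
        (∀ j, c j ∈ Subfield.closure
          (Set.range ((algebraMap (MvPolynomial (Fin n) K)
                (FractionRing (MvPolynomial (Fin n) K))).comp
              ((MvPolynomial.C : K →+* MvPolynomial (Fin n) K).comp (algebraMap F K))) ∪
            Set.range (fun i => algebraMap (MvPolynomial (Fin n) K)
              (FractionRing (MvPolynomial (Fin n) K)) (g i)))) ∧
        (∀ j, 2 ≤ ∑ i, e j i) ∧
        q ∈ (Ideal.span (Set.range (MvPolynomial.X :
              Fin n → MvPolynomial (Fin n) (FractionRing (MvPolynomial (Fin n) K))))) ^ (t + 1) ∧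
        ∑ i, MvPolynomial.C (α i) *
            MvPolynomial.map (algebraMap (MvPolynomial (Fin n) K)
              (FractionRing (MvPolynomial (Fin n) K))) (Ht t (g i)) =
          ∑ j, MvPolynomial.C (c j) *
              ∏ i, (MvPolynomial.map (algebraMap (MvPolynomial (Fin n) K)
                (FractionRing (MvPolynomial (Fin n) K))) (Ht t (g i))) ^ (e j i)
            + q := by
  set ι := algebraMap (MvPolynomial (Fin n) K) (FractionRing (MvPolynomial (Fin n) K))
  set φ := ι.comp ((C : K →+* MvPolynomial (Fin n) K).comp (algebraMap F K))
  set T := Subfield.closure (Set.range φ ∪ Set.range fun i => ι (g i))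
  have hι : ∀ p, ι (aeval g p) = eval₂ φ (fun i => ι (g i)) p := map_aeval g ι
  obtain ⟨A, hAg, i₀, hi₀⟩ := exists_aeval_eq_zero_and_aeval_pderiv_ne_zero hdep
  set B := shift φ (fun i => ι (g i)) A
  have hBT : ∀ m, coeff m B ∈ T := coeff_shift_mem (T := T.toSubring.toSubsemiring) φ
    (fun a => Subfield.subset_closure (Or.inl ⟨a, rfl⟩))
    (fun i => Subfield.subset_closure (Or.inr ⟨i, rfl⟩)) A
  have hB0 : coeff 0 B = 0 := by
    rw [← constantCoeff_eq, constantCoeff_shift, ← hι, hAg, map_zero]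
  obtain ⟨M, e, he, hrel⟩ := exists_sum_coeff_single_smul_eq hB0 fun i => map ι (Ht t (g i))
  simp only [smul_eq_C_mul] at hrel
  refine ⟨fun i => coeff (single i 1) B, fun hα => hi₀ ?_, fun i => hBT _, M,
    fun j => -coeff (e j) B, fun j i => e j i, _, fun j => neg_mem (hBT _),
    fun j => (degree_eq_sum (e j)).symm.trans_ge (he j), aeval_map_Ht_shift_mem_pow_span_X ι hAg t,
    hrel⟩
  have := congrFun hα i₀
  rw [Pi.zero_apply, coeff_single_one_shift, ← hι] at this
  exact (IsFractionRing.injective _ _).eq_iff.mp (this.trans (map_zero ι).symm)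

/-- Let `F` be an algebraically closed field, `K` an extension field of `F`, and let
`g_1, …, g_k ∈ K[y_1,…,y_n]` be `F`-algebraically dependent.  Then for every positive
integer `t` there exist `α_1, …, α_k`, not all zero, in the subfield
`F(g_1(v),…,g_k(v))` of `K(v)` generated over `F` by the `g_i(v)`, such that
`∑ i, α_i · H_t(g_i)` lies in the `F(g(v))`-linear span of the products
`H_t(g_{i_1}) ⋯ H_t(g_{i_r})` with `r ≥ 2` plus the ideal `⟨y_1,…,y_n⟩^{t+1}`.
(The span element is written as `∑ j, c_j · ∏ i, H_t(g_i)^{e_j i}` with coefficients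
`c_j` in the subfield and `∑ i, e_j i ≥ 2`.) -/
theorem pss_dependence (F K : Type*) [Field F] [IsAlgClosed F] [Field K] [Algebra F K]
    (n k : ℕ) (g : Fin k → MvPolynomial (Fin n) K)
    (hdep : ¬ AlgebraicIndependent F g) (t : ℕ) (ht : 0 < t) :
    ∃ α : Fin k → FractionRing (MvPolynomial (Fin n) K),
      α ≠ 0 ∧
      (∀ i, α i ∈ Subfield.closure
        (Set.range ((algebraMap (MvPolynomial (Fin n) K)
              (FractionRing (MvPolynomial (Fin n) K))).comp
            ((MvPolynomial.C : K →+* MvPolynomial (Fin n) K).comp (algebraMap F K))) ∪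
          Set.range (fun i => algebraMap (MvPolynomial (Fin n) K)
            (FractionRing (MvPolynomial (Fin n) K)) (g i)))) ∧
      ∃ (M : ℕ) (c : Fin M → FractionRing (MvPolynomial (Fin n) K))
        (e : Fin M → Fin k → ℕ)
        (q : MvPolynomial (Fin n) (FractionRing (MvPolynomial (Fin n) K))),
        (∀ j, c j ∈ Subfield.closure
          (Set.range ((algebraMap (MvPolynomial (Fin n) K)
                (FractionRing (MvPolynomial (Fin n) K))).comp
              ((MvPolynomial.C : K →+* MvPolynomial (Fin n) K).comp (algebraMap F K))) ∪
            Set.range (fun i => algebraMap (MvPolynomial (Fin n) K)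
              (FractionRing (MvPolynomial (Fin n) K)) (g i)))) ∧
        (∀ j, 2 ≤ ∑ i, e j i) ∧
        q ∈ (Ideal.span (Set.range (MvPolynomial.X :
              Fin n → MvPolynomial (Fin n) (FractionRing (MvPolynomial (Fin n) K))))) ^ (t + 1) ∧
        ∑ i, MvPolynomial.C (α i) *
            MvPolynomial.map (algebraMap (MvPolynomial (Fin n) K)
              (FractionRing (MvPolynomial (Fin n) K))) (Ht t (g i)) =
          ∑ j, MvPolynomial.C (c j) *
              ∏ i, (MvPolynomial.map (algebraMap (MvPolynomial (Fin n) K)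
                (FractionRing (MvPolynomial (Fin n) K))) (Ht t (g i))) ^ (e j i)
            + q :=
  pss_dependence_general F K n k g hdep t

end
end
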